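/- arXiv:2311.13067 — 2 statements merged into one kernel-verified Lean document; each statement's English description precedes it below -/
import Mathlib

section
/- Let G be a connected topological group acting on a set X and acting continuously on a T1 topological space Y. Let f : Y → X be a G-equivariant map which is continuous and locally injective, i.e. every point of Y has an open neighborhood on which f is injective. Then for every G-fixed point x ∈ X, every point of the fiber f⁻¹(x) is fixed by G; consequently the set of G-fixed points of Y equals the preimage under f of the set of G-fixed points of X. -/
/-- Let a connected topological group `G` act on `X` and act continuously on a T1 space `Y`,
and let `f : Y → X` be a `G`-equivariant, continuous, locally injective map. Then every
point of the fiber of `f` over a `G`-fixed point of `X` is `G`-fixed; consequently the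
`G`-fixed locus of `Y` is the preimage under `f` of the `G`-fixed locus of `X`. -/
theorem fixed_points_of_locally_injective_equivariant
    (G X Y : Type*) [Group G] [TopologicalSpace G] [IsTopologicalGroup G] [ConnectedSpace G]
    [MulAction G X] [TopologicalSpace X]
    [MulAction G Y] [TopologicalSpace Y] [T1Space Y] [ContinuousSMul G Y]
    (f : Y → X) (hequiv : ∀ (g : G) (y : Y), f (g • y) = g • f y)
    (hcont : Continuous f)
    (hloc : ∀ y : Y, ∃ U : Set Y, IsOpen U ∧ y ∈ U ∧ Set.InjOn f U) :
    (∀ x : X, (∀ g : G, g • x = x) → ∀ y : Y, f y = x → ∀ g : G, g • y = y) ∧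
    {y : Y | ∀ g : G, g • y = y} = f ⁻¹' {x : X | ∀ g : G, g • x = x} := by
  have main : ∀ x : X, (∀ g : G, g • x = x) → ∀ y : Y, f y = x → ∀ g : G, g • y = y := by
    intro x hx y hfy
    set S : Set G := {g : G | g • y = y} with hS
    have hcφ : Continuous fun h : G => h • y :=
      continuous_id.smul continuous_const
    have hopen : IsOpen S := by
      rw [isOpen_iff_mem_nhds]
      intro g hg
      obtain ⟨U, hU, hyU, hinj⟩ := hloc (g • y)
      have hpre : IsOpen ((fun h : G => h • y) ⁻¹' U) := hU.preimage hcφ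
      have hgmem : g ∈ (fun h : G => h • y) ⁻¹' U := hyU
      refine Filter.mem_of_superset (hpre.mem_nhds hgmem) ?_
      intro h hh
      have hfh : f (h • y) = f (g • y) := by
        rw [hequiv, hequiv, hfy, hx, hx]
      have h2 : h • y = g • y := hinj hh hyU hfh
      show h • y = y
      rw [h2, hg]
    have hclosed : IsClosed S := by
      have : S = (fun h : G => h • y) ⁻¹' {y} := rfl
      rw [this]
      exact (isClosed_singleton).preimage hcφ
    have hne : S.Nonempty := ⟨1, one_smul G y⟩
    have huniv : S = Set.univ := IsClopen.eq_univ ⟨hclosed, hopen⟩ hne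
    intro g
    have : g ∈ S := huniv ▸ Set.mem_univ g
    exact this
  refine ⟨main, ?_⟩
  ext y
  constructor
  · intro hy g
    show g • f y = f y
    rw [← hequiv, hy g]
  · intro hy g
    exact main (f y) hy y rfl g
end

section
/- Let X be a type. On the set of pairs (n, f) with n a positive natural number and f : Fin n → X, consider the equivalence relation generated by (n, f) ∼ (m, f ∘ s) for every surjection s : Fin m → Fin n. Then two pairs (n, f) and (m, g) are equivalent if and only if f and g have the same image in X; consequently the quotient set is in bijection with the set of nonempty finite subsets of X. -/
/-- The generating relation of the Ran space: `(n, f) ∼ (m, f ∘ s)` for every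
surjection `s : Fin m → Fin n`. -/
def ranRel (X : Type*) :
    (Σ n : ℕ+, Fin (n : ℕ) → X) → (Σ n : ℕ+, Fin (n : ℕ) → X) → Prop :=
  fun a b => ∃ s : Fin (b.1 : ℕ) → Fin (a.1 : ℕ), Function.Surjective s ∧ b.2 = a.2 ∘ s

section aux

variable {X : Type*}

/-- concatenation of two tuples, with explicit nat arithmetic -/
private def myApp {n m : ℕ} (f : Fin n → X) (g : Fin m → X) : Fin (n + m) → X :=
  fun i => if hi : (i : ℕ) < n then f ⟨i, hi⟩ else g ⟨(i : ℕ) - n, by omega⟩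

private lemma left_rel {n m : ℕ} (f : Fin n → X) (g : Fin m → X)
    (hsub : Set.range g ⊆ Set.range f) :
    ∃ s : Fin (n + m) → Fin n, Function.Surjective s ∧ myApp f g = f ∘ s := by
  have hc : ∀ i : Fin (n + m), (hi : ¬ (i : ℕ) < n) →
      ∃ j : Fin n, f j = g ⟨(i : ℕ) - n, by have := i.isLt; omega⟩ := by
    intro i hi
    exact hsub ⟨⟨(i : ℕ) - n, by have := i.isLt; omega⟩, rfl⟩
  refine ⟨fun i => if hi : (i : ℕ) < n then ⟨i, hi⟩ else (hc i hi).choose, ?_, ?_⟩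
  · intro j
    refine ⟨⟨(j : ℕ), by omega⟩, ?_⟩
    simp [j.2]
  · funext i
    by_cases hi : (i : ℕ) < n
    · simp [myApp, hi]
    · simp only [myApp, hi, dif_neg, Function.comp_apply]
      exact ((hc i hi).choose_spec).symm

private lemma right_rel {n m : ℕ} (f : Fin n → X) (g : Fin m → X)
    (hsub : Set.range f ⊆ Set.range g) :
    ∃ s : Fin (n + m) → Fin m, Function.Surjective s ∧ myApp f g = g ∘ s := by
  have hc : ∀ i : Fin (n + m), (hi : (i : ℕ) < n) →
      ∃ j : Fin m, g j = f ⟨(i : ℕ), hi⟩ := by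
    intro i hi
    exact hsub ⟨⟨(i : ℕ), hi⟩, rfl⟩
  refine ⟨fun i => if hi : (i : ℕ) < n then (hc i hi).choose else ⟨(i : ℕ) - n, by omega⟩,
    ?_, ?_⟩
  · intro j
    refine ⟨⟨n + (j : ℕ), by omega⟩, ?_⟩
    simp
  · funext i
    by_cases hi : (i : ℕ) < n
    · simp only [myApp, hi, dif_pos, Function.comp_apply]
      exact ((hc i hi).choose_spec).symm
    · simp [myApp, hi]

private lemma range_eq_of_ranRel {a b : Σ n : ℕ+, Fin (n : ℕ) → X}
    (h : ranRel X a b) : Set.range a.2 = Set.range b.2 := by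
  obtain ⟨s, hs, heq⟩ := h
  rw [heq, Set.range_comp, hs.range_eq, Set.image_univ]

private def ranToSet (X : Type*) : Quot (ranRel X) → {s : Set X // s.Finite ∧ s.Nonempty} :=
  Quot.lift (fun a => ⟨Set.range a.2, Set.finite_range _, ⟨a.2 ⟨0, a.1.pos⟩, ⟨0, a.1.pos⟩, rfl⟩⟩)
    (fun _ _ h => Subtype.ext (range_eq_of_ranRel h))

end aux

/-- Two pairs `(n, f)` and `(m, g)` (with `n, m > 0`) are equivalent under the equivalence
relation generated by precomposition with surjections `Fin m → Fin n` if and only if `f`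
and `g` have the same image; consequently the quotient is in bijection with the set of
nonempty finite subsets of `X`. -/
theorem ran_space_points (X : Type*) :
    (∀ a b : Σ n : ℕ+, Fin (n : ℕ) → X,
      Relation.EqvGen (ranRel X) a b ↔ Set.range a.2 = Set.range b.2) ∧
    ∃ e : Quot (ranRel X) ≃ {s : Set X // s.Finite ∧ s.Nonempty},
      ∀ a : Σ n : ℕ+, Fin (n : ℕ) → X,
        (e (Quot.mk (ranRel X) a) : Set X) = Set.range a.2 := by
  have key : ∀ a b : Σ n : ℕ+, Fin (n : ℕ) → X,
      Relation.EqvGen (ranRel X) a b ↔ Set.range a.2 = Set.range b.2 := by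
    intro a b
    constructor
    · intro h
      induction h with
      | rel x y h => exact range_eq_of_ranRel h
      | refl x => rfl
      | symm x y _ ih => exact ih.symm
      | trans x y z _ _ ih₁ ih₂ => exact ih₁.trans ih₂
    · intro h
      obtain ⟨n, f⟩ := a
      obtain ⟨m, g⟩ := b
      simp only at h
      have hnm : ((n + m : ℕ+) : ℕ) = (n : ℕ) + (m : ℕ) := rfl
      set c : Σ k : ℕ+, Fin (k : ℕ) → X := ⟨n + m, fun i => myApp f g (Fin.cast hnm i)⟩
      have h1 : ranRel X ⟨n, f⟩ c := by
        obtain ⟨s, hs, heq⟩ := left_rel f g h.symm.le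
        exact ⟨fun i => s (Fin.cast hnm i), fun j => by
          obtain ⟨i, hi⟩ := hs j; exact ⟨Fin.cast hnm.symm i, by exact hi⟩,
          by funext i; exact congrFun heq (Fin.cast hnm i)⟩
      have h2 : ranRel X ⟨m, g⟩ c := by
        obtain ⟨s, hs, heq⟩ := right_rel f g h.le
        exact ⟨fun i => s (Fin.cast hnm i), fun j => by
          obtain ⟨i, hi⟩ := hs j; exact ⟨Fin.cast hnm.symm i, by exact hi⟩,
          by funext i; exact congrFun heq (Fin.cast hnm i)⟩
      exact (Relation.EqvGen.rel _ _ h1).trans _ _ _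
        ((Relation.EqvGen.rel _ _ h2).symm _ _)
  refine ⟨key, ?_⟩
  set F := ranToSet X with hF
  have hbij : Function.Bijective F := by
    constructor
    · intro x y
      induction x using Quot.ind with | mk a => ?_
      induction y using Quot.ind with | mk b => ?_
      intro h
      have : Set.range a.2 = Set.range b.2 := congrArg Subtype.val h
      exact Quot.eqvGen_sound ((key a b).mpr this)
    · rintro ⟨s, hfin, hsne⟩
      haveI : Fintype s := hfin.fintype
      have hpos : 0 < Fintype.card s := Fintype.card_pos_iff.mpr
        (Set.Nonempty.to_subtype hsne)
      let e := (Fintype.equivFin s).symm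
      refine ⟨Quot.mk _ ⟨⟨Fintype.card s, hpos⟩, fun i => (e i : X)⟩, ?_⟩
      apply Subtype.ext
      simp only [F]
      show Set.range (Subtype.val ∘ e) = s
      rw [Set.range_comp, e.surjective.range_eq, Set.image_univ, Subtype.range_coe]
  refine ⟨Equiv.ofBijective F hbij, fun a => ?_⟩
  rfl
end
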